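/- The three submodules R(e,u), R(e,v), R(e,w) pairwise intersect in exactly the diagonal set {(x, x) : x ∈ I_l}; that is, R(e,u) ∩ R(e,v) = R(e,v) ∩ R(e,w) = R(e,u) ∩ R(e,w) = {(x, x) : x ∈ I_l}, a set of 8 vectors. -/

import Mathlib

open Matrix

/-- The matrix m(a,b,c,d) = [[a,c,d],[0,b,0],[0,0,b]] over GF(2). -/
def m (a b c d : ZMod 2) : Matrix (Fin 3) (Fin 3) (ZMod 2) :=
  !![a, c, d; 0, b, 0; 0, 0, b]

lemma m_mul (a b c d a' b' c' d' : ZMod 2) :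
    m a b c d * m a' b' c' d' =
      m (a * a') (b * b') (a * c' + c * b') (a * d' + d * b') := by
  ext i j
  fin_cases i <;> fin_cases j <;>
    simp [m, Matrix.mul_apply, Fin.sum_univ_three, Matrix.vecHead, Matrix.vecTail]

/-- The ring R, as a subring of the 3×3 matrices over GF(2). -/
def Rring : Subring (Matrix (Fin 3) (Fin 3) (ZMod 2)) where
  carrier := {A | ∃ a b c d : ZMod 2, A = m a b c d}
  zero_mem' := ⟨0, 0, 0, 0, by ext i j; fin_cases i <;> fin_cases j <;> simp [m, Matrix.vecHead, Matrix.vecTail]⟩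
  one_mem' := ⟨1, 1, 0, 0, by ext i j; fin_cases i <;> fin_cases j <;> simp [m, Matrix.one_apply, Matrix.vecHead, Matrix.vecTail]⟩
  add_mem' := by
    rintro A B ⟨a, b, c, d, rfl⟩ ⟨a', b', c', d', rfl⟩
    exact ⟨a + a', b + b', c + c', d + d',
      by ext i j; fin_cases i <;> fin_cases j <;> simp [m, Matrix.vecHead, Matrix.vecTail]⟩
  neg_mem' := by
    rintro A ⟨a, b, c, d, rfl⟩
    exact ⟨-a, -b, -c, -d,
      by ext i j; fin_cases i <;> fin_cases j <;> simp [m, Matrix.vecHead, Matrix.vecTail]⟩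
  mul_mem' := by
    rintro A B ⟨a, b, c, d, rfl⟩ ⟨a', b', c', d', rfl⟩
    exact ⟨a * a', b * b', a * c' + c * b', a * d' + d * b', m_mul a b c d a' b' c' d'⟩

lemma m_mem (a b c d : ZMod 2) : m a b c d ∈ Rring := ⟨a, b, c, d, rfl⟩

/-- The element m(a,b,c,d) viewed as an element of the ring R. -/
def mm (a b c d : ZMod 2) : Rring := ⟨m a b c d, m_mem a b c d⟩

/-- The cyclic left submodule R(x,y) = {(αx, αy) : α ∈ R} of R², as a set of vectors. -/
def RM (x y : Rring) : Set (Rring × Rring) := {p | ∃ α : Rring, p = (α * x, α * y)}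

def t : Rring := mm 0 0 1 0
def f : Rring := mm 0 0 1 1
def s : Rring := mm 0 0 0 1
def e : Rring := mm 0 1 0 0
def u : Rring := mm 0 1 1 0
def v : Rring := mm 0 1 1 1
def w : Rring := mm 0 1 0 1

/-- The nine distinguished generators. -/
def gens : List (Rring × Rring) :=
  [(t, e), (f, e), (s, e), (e, u), (e, v), (e, w), (e, s), (e, f), (e, t)]

/-- The set I_l = {m(0,b,c,d) : b,c,d ∈ GF(2)}, as a subset of R. -/
def Il : Set Rring := {x | ∃ b c d : ZMod 2, x = mm 0 b c d}

/-!
Right multiplication by `e` sends `m(a,b,c,d)` to `m(0,b,c,d)`, and right multiplication by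
`m(0,1,γ,δ)` adds `a • (γ, δ)` to the last two entries of that. So `R(e, m(0,1,γ,δ))` consists of
the pairs `(x, x + a • m(0,0,γ,δ))` with `x ∈ I_l` and `a ∈ GF(2)`. For a common element of two
such submodules `a • (γ₁, δ₁) = a' • (γ₂, δ₂)`, which forces `a = 0` as soon as `(γ₁, δ₁)` is
nonzero and differs from `(γ₂, δ₂)`. Then the element is `(x, x)`.
-/

theorem eq_zero_of_smul_eq_smul_zmod_two {M : Type*} [AddCommGroup M] [Module (ZMod 2) M]
    {x y : M} (hx : x ≠ 0) (hxy : x ≠ y) {a a' : ZMod 2} (h : a • x = a' • y) : a = 0 := by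
  have two_cases : ∀ z : ZMod 2, z = 0 ∨ z = 1 := by decide
  rcases two_cases a with rfl | rfl
  · rfl
  rcases two_cases a' with rfl | rfl <;> simp_all

lemma m_injective {a b c d a' b' c' d' : ZMod 2} (h : m a b c d = m a' b' c' d') :
    a = a' ∧ b = b' ∧ c = c' ∧ d = d' := by
  have h00 := congrFun (congrFun h 0) 0
  have h11 := congrFun (congrFun h 1) 1
  have h01 := congrFun (congrFun h 0) 1
  have h02 := congrFun (congrFun h 0) 2
  simp only [m, of_apply, cons_val', cons_val_zero, cons_val_one, cons_val_two, empty_val',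
    cons_val_fin_one, Nat.succ_eq_add_one, Nat.reduceAdd, vecHead, vecTail] at h00 h11 h01 h02
  exact ⟨h00, h11, h01, h02⟩

lemma mm_injective {a b c d a' b' c' d' : ZMod 2} (h : mm a b c d = mm a' b' c' d') :
    a = a' ∧ b = b' ∧ c = c' ∧ d = d' :=
  m_injective (congrArg Subtype.val h)

lemma exists_eq_mm (α : Rring) : ∃ a b c d : ZMod 2, α = mm a b c d := by
  obtain ⟨a, b, c, d, h⟩ := α.2
  exact ⟨a, b, c, d, Subtype.ext h⟩

lemma mm_mul_mm_zero_one (a b c d γ δ : ZMod 2) :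
    mm a b c d * mm 0 1 γ δ = mm 0 b (c + a * γ) (d + a * δ) := by
  apply Subtype.ext
  change m a b c d * m 0 1 γ δ = m 0 b (c + a * γ) (d + a * δ)
  rw [m_mul]
  ring_nf

lemma mem_RM_e_iff (γ δ : ZMod 2) (p : Rring × Rring) :
    p ∈ RM e (mm 0 1 γ δ) ↔
      ∃ a b c d : ZMod 2, p = (mm 0 b c d, mm 0 b (c + a * γ) (d + a * δ)) := by
  constructor
  · rintro ⟨α, rfl⟩
    obtain ⟨a, b, c, d, rfl⟩ := exists_eq_mm α
    refine ⟨a, b, c, d, ?_⟩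
    rw [e, mm_mul_mm_zero_one, mm_mul_mm_zero_one, mul_zero, add_zero, add_zero]
  · rintro ⟨a, b, c, d, rfl⟩
    refine ⟨mm a b c d, ?_⟩
    rw [e, mm_mul_mm_zero_one, mm_mul_mm_zero_one, mul_zero, add_zero, add_zero]

lemma diagonal_Il_subset_RM_e (γ δ : ZMod 2) :
    {p : Rring × Rring | ∃ x ∈ Il, p = (x, x)} ⊆ RM e (mm 0 1 γ δ) := by
  rintro p ⟨x, ⟨b, c, d, rfl⟩, rfl⟩
  rw [mem_RM_e_iff]
  exact ⟨0, b, c, d, by simp only [zero_mul, add_zero]⟩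

lemma RM_e_inter_RM_e {γ₁ δ₁ γ₂ δ₂ : ZMod 2} (h₁ : (γ₁, δ₁) ≠ 0) (h₁₂ : (γ₁, δ₁) ≠ (γ₂, δ₂)) :
    RM e (mm 0 1 γ₁ δ₁) ∩ RM e (mm 0 1 γ₂ δ₂) = {p : Rring × Rring | ∃ x ∈ Il, p = (x, x)} := by
  refine Set.Subset.antisymm ?_
    (Set.subset_inter (diagonal_Il_subset_RM_e _ _) (diagonal_Il_subset_RM_e _ _))
  rintro p ⟨hp₁, hp₂⟩
  obtain ⟨a, b, c, d, rfl⟩ := (mem_RM_e_iff _ _ _).1 hp₁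
  obtain ⟨a', b', c', d', hp⟩ := (mem_RM_e_iff _ _ _).1 hp₂
  obtain ⟨hfst, hsnd⟩ := Prod.mk.inj hp
  obtain ⟨-, rfl, rfl, rfl⟩ := mm_injective hfst
  obtain ⟨-, -, hγ, hδ⟩ := mm_injective hsnd
  have ha : a = 0 := eq_zero_of_smul_eq_smul_zmod_two h₁ h₁₂
    (Prod.ext (add_left_cancel hγ) (add_left_cancel hδ))
  subst ha
  exact ⟨mm 0 b c d, ⟨b, c, d, rfl⟩, by simp only [zero_mul, add_zero]⟩

lemma ncard_diagonal_Il : {p : Rring × Rring | ∃ x ∈ Il, p = (x, x)}.ncard = 8 := by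
  have hIl : Il = Set.range (fun q : ZMod 2 × ZMod 2 × ZMod 2 => mm 0 q.1 q.2.1 q.2.2) := by
    ext x
    exact ⟨fun ⟨b, c, d, h⟩ => ⟨(b, c, d), h.symm⟩, fun ⟨(b, c, d), h⟩ => ⟨b, c, d, h.symm⟩⟩
  have hmm : Function.Injective (fun q : ZMod 2 × ZMod 2 × ZMod 2 => mm 0 q.1 q.2.1 q.2.2) := by
    rintro ⟨b, c, d⟩ ⟨b', c', d'⟩ h
    obtain ⟨-, rfl, rfl, rfl⟩ := mm_injective h
    rfl
  have hdiag : {p : Rring × Rring | ∃ x ∈ Il, p = (x, x)} = (fun x => (x, x)) '' Il := by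
    ext p
    exact ⟨fun ⟨x, hx, h⟩ => ⟨x, hx, h.symm⟩, fun ⟨x, hx, h⟩ => ⟨x, hx, h.symm⟩⟩
  rw [hdiag, Set.ncard_image_of_injective _ fun x y h => (Prod.mk.inj h).1, hIl,
    Set.ncard_range_of_injective hmm]
  simp [Nat.card_eq_fintype_card]

/-- The submodules R(e,u), R(e,v), R(e,w) pairwise intersect in exactly the diagonal
set {(x,x) : x ∈ I_l}, a set of 8 vectors. -/
theorem pairwise_intersections_second_triple :
    RM e u ∩ RM e v = {p : Rring × Rring | ∃ x ∈ Il, p = (x, x)} ∧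
    RM e v ∩ RM e w = {p : Rring × Rring | ∃ x ∈ Il, p = (x, x)} ∧
    RM e u ∩ RM e w = {p : Rring × Rring | ∃ x ∈ Il, p = (x, x)} ∧
    {p : Rring × Rring | ∃ x ∈ Il, p = (x, x)}.ncard = 8 :=
  ⟨RM_e_inter_RM_e (by decide) (by decide), RM_e_inter_RM_e (by decide) (by decide),
    RM_e_inter_RM_e (by decide) (by decide), ncard_diagonal_Il⟩
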